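/- arXiv:1705.09245 — 3 statements merged into one kernel-verified Lean document; each statement's English description precedes it below -/
import Mathlib

section
/- Let C be a convex subset of ℝ^d, and let P₁ and P₂ be two distinct extreme points of C. Let Ω be a finite set and let q₁, q₂ : Ω → ℝ be nonnegative weight functions each summing to 1, and suppose there exists ω₀ ∈ Ω with q₁(ω₀) > 0 and q₂(ω₀) > 0 (overlapping supports). Then there is no map T : Ω → C satisfying both ∑_{ω∈Ω} q₁(ω) • T(ω) = P₁ and ∑_{ω∈Ω} q₂(ω) • T(ω) = P₂. In other words, no point estimator valued in C is simultaneously unbiased at two distinct extreme points whose sampling distributions have overlapping supports. -/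
/-!
An extreme point of a convex set can be written as a convex combination of points of the set
only if every point with positive weight is the extreme point itself: otherwise it lies in the
open segment between that point and the centre of mass of the others. Applied at `ω₀` under
both `q₁` and `q₂`, this forces `T ω₀ = P₁` and `T ω₀ = P₂`.
-/

open Finset

theorem Set.eq_of_mem_extremePoints_of_sum_smul_eq {𝕜 E ι : Type*} [Field 𝕜] [LinearOrder 𝕜]
    [IsStrictOrderedRing 𝕜] [AddCommGroup E] [Module 𝕜 E] {C : Set E} (hC : Convex 𝕜 C)
    {x : E} (hx : x ∈ C.extremePoints 𝕜) {s : Finset ι} {w : ι → 𝕜} {z : ι → E}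
    (hw₀ : ∀ j ∈ s, 0 ≤ w j) (hw₁ : ∑ j ∈ s, w j = 1) (hz : ∀ j ∈ s, z j ∈ C)
    (hsum : ∑ j ∈ s, w j • z j = x) {i : ι} (hi : i ∈ s) (hwi : 0 < w i) : z i = x := by
  classical
  set b := ∑ j ∈ s.erase i, w j
  have hw₁' : w i + b = 1 := by rw [add_sum_erase s w hi, hw₁]
  have hsum' : w i • z i + ∑ j ∈ s.erase i, w j • z j = x := by
    rw [add_sum_erase s (fun j ↦ w j • z j) hi, hsum]
  have hb₀ : 0 ≤ b := sum_nonneg fun j hj ↦ hw₀ j (mem_of_mem_erase hj)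
  rcases hb₀.eq_or_lt with hb | hb
  · have hrest : ∀ j ∈ s.erase i, w j = 0 :=
      (sum_eq_zero_iff_of_nonneg fun j hj ↦ hw₀ j (mem_of_mem_erase hj)).1 hb.symm
    have hwi₁ : w i = 1 := by linarith
    rwa [sum_eq_zero fun j hj ↦ by rw [hrest j hj, zero_smul], add_zero, hwi₁, one_smul]
      at hsum'
  · have hy : (s.erase i).centerMass w z ∈ C :=
      hC.centerMass_mem (fun j hj ↦ hw₀ j (mem_of_mem_erase hj)) hb
        fun j hj ↦ hz j (mem_of_mem_erase hj)
    refine hx.2 (hz i hi) hy ⟨w i, b, hwi, hb, hw₁', ?_⟩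
    rwa [centerMass, smul_inv_smul₀ hb.ne']

/-- **No estimator valued in a convex set is unbiased at two distinct extreme points
whose sampling distributions have overlapping supports.**
(Abstract core of Proposition 1 of the paper.) -/
theorem stmt_0 {d : ℕ} (C : Set (EuclideanSpace ℝ (Fin d))) (hC : Convex ℝ C)
    (P₁ P₂ : EuclideanSpace ℝ (Fin d))
    (hP₁ : P₁ ∈ Set.extremePoints ℝ C) (hP₂ : P₂ ∈ Set.extremePoints ℝ C)
    (hne : P₁ ≠ P₂)
    {Ω : Type*} [Fintype Ω] (q₁ q₂ : Ω → ℝ)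
    (hq₁0 : ∀ ω, 0 ≤ q₁ ω) (hq₂0 : ∀ ω, 0 ≤ q₂ ω)
    (hq₁1 : ∑ ω, q₁ ω = 1) (hq₂1 : ∑ ω, q₂ ω = 1)
    (ω₀ : Ω) (h₁ : 0 < q₁ ω₀) (h₂ : 0 < q₂ ω₀) :
    ¬ ∃ T : Ω → EuclideanSpace ℝ (Fin d),
        (∀ ω, T ω ∈ C) ∧ (∑ ω, q₁ ω • T ω = P₁) ∧ (∑ ω, q₂ ω • T ω = P₂) := by
  rintro ⟨T, hT, hT₁, hT₂⟩
  have hTP₁ : T ω₀ = P₁ := Set.eq_of_mem_extremePoints_of_sum_smul_eq hC hP₁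
    (fun ω _ ↦ hq₁0 ω) hq₁1 (fun ω _ ↦ hT ω) hT₁ (mem_univ ω₀) h₁
  have hTP₂ : T ω₀ = P₂ := Set.eq_of_mem_extremePoints_of_sum_smul_eq hC hP₂
    (fun ω _ ↦ hq₂0 ω) hq₂1 (fun ω _ ↦ hT ω) hT₂ (mem_univ ω₀) h₂
  exact hne (hTP₁.symm.trans hTP₂)
end

section
/- Define f ∈ ℝ^16 (indexed by (a,b,x,y) with a,b,x,y ∈ {0,1}) by: for (x,y)=(0,0): f(0,0)=3/10, f(0,1)=0, f(1,0)=1/10, f(1,1)=6/10; for (x,y)=(0,1): f(0,0)=7/10, f(0,1)=0, f(1,0)=1/10, f(1,1)=2/10; for (x,y)=(1,0): f(0,0)=5/10, f(0,1)=1/10, f(1,0)=1/10, f(1,1)=3/10; for (x,y)=(1,1): f(0,0)=1/10, f(0,1)=6/10, f(1,0)=3/10, f(1,1)=0. Then f is nonnegative and normalized, and the orthogonal projection p of f onto the nonsignaling affine subspace 𝒩̄ (the unique nearest point of 𝒩̄ to f in Euclidean norm) satisfies p(1,1|1,1) = −3/40 < 0. In particular, there exists a nonnegative normalized correlation vector whose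 orthogonal projection onto the nonsignaling affine subspace has a negative entry. -/
open scoped BigOperators

set_option maxHeartbeats 1000000

/-- The nonsignaling affine subspace `𝒩̄` in the simplest Bell scenario: normalized
correlation vectors `P(a,b|x,y)` (indexed as `P a b x y`) satisfying the nonsignaling
equalities. -/
def NSbar : Set (Fin 2 → Fin 2 → Fin 2 → Fin 2 → ℝ) :=
  {P | (∀ x y, ∑ a, ∑ b, P a b x y = 1) ∧
       (∀ a x y y', ∑ b, P a b x y = ∑ b, P a b x y') ∧
       (∀ b x x' y, ∑ a, P a b x y = ∑ a, P a b x' y)}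

/-- Squared Euclidean distance between two correlation vectors in `ℝ^16`. -/
def distSq (f g : Fin 2 → Fin 2 → Fin 2 → Fin 2 → ℝ) : ℝ :=
  ∑ a, ∑ b, ∑ x, ∑ y, (f a b x y - g a b x y) ^ 2

/-- The explicit relative-frequency vector of Eq. (B3) of the paper, `fEx a b x y`
being `f(a,b|x,y)`. -/
noncomputable def fEx : Fin 2 → Fin 2 → Fin 2 → Fin 2 → ℝ :=
  fun a b x y =>
    ![![![![(3:ℝ)/10, 0], ![1/10, 6/10]],
        ![![7/10, 0], ![1/10, 2/10]]],
      ![![![5/10, 1/10], ![1/10, 3/10]],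
        ![![1/10, 6/10], ![3/10, 0]]]] x y a b

/-- The orthogonal projection of `fEx` onto the nonsignaling affine subspace. -/
noncomputable def pEx : Fin 2 → Fin 2 → Fin 2 → Fin 2 → ℝ :=
  fun a b x y =>
    ![![![![(9:ℝ)/20, 1/20], ![1/20, 9/20]],
        ![![1/2, 0], ![1/10, 2/5]]],
      ![![![19/40, 7/40], ![1/40, 13/40]],
        ![![7/40, 19/40], ![17/40, -3/40]]]] x y a b

lemma pEx_mem : pEx ∈ NSbar := by
  refine ⟨?_, ?_, ?_⟩
  · intro x y; fin_cases x <;> fin_cases y <;>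
      simp [pEx, Fin.sum_univ_two] <;> norm_num
  · intro a x y y'; fin_cases a <;> fin_cases x <;> fin_cases y <;> fin_cases y' <;>
      simp [pEx, Fin.sum_univ_two] <;> norm_num
  · intro b x x' y; fin_cases b <;> fin_cases x <;> fin_cases x' <;> fin_cases y <;>
      simp [pEx, Fin.sum_univ_two] <;> norm_num

lemma key : ∀ q ∈ NSbar, distSq fEx q = distSq fEx pEx + distSq pEx q := by
  rintro q ⟨h1, h2, h3⟩
  have e00 := h1 0 0; have e01 := h1 0 1; have e10 := h1 1 0; have e11 := h1 1 1
  have a00 := h2 0 0 0 1; have a01 := h2 0 1 0 1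
  have b00 := h3 0 0 1 0; have b01 := h3 0 0 1 1
  simp only [Fin.sum_univ_two] at e00 e01 e10 e11 a00 a01 b00 b01
  simp only [distSq, fEx, pEx, Fin.sum_univ_two]
  norm_num [Matrix.cons_val_zero, Matrix.cons_val_one, Matrix.head_cons]
  ring_nf
  ring_nf at e00 e01 e10 e11 a00 a01 b00 b01
  linarith

lemma distSq_nonneg (f g : Fin 2 → Fin 2 → Fin 2 → Fin 2 → ℝ) : 0 ≤ distSq f g := by
  unfold distSq
  positivity

/-- **The projection method can output unphysical (negative) probabilities.**
The vector `fEx` is nonnegative and normalized, its orthogonal projection onto the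
nonsignaling affine subspace exists, and any nearest point `p` of `𝒩̄` to `fEx`
(in Euclidean norm) satisfies `p(1,1|1,1) = −3/40 < 0`. -/
theorem stmt_11 :
    (∀ a b x y, 0 ≤ fEx a b x y) ∧ (∀ x y, ∑ a, ∑ b, fEx a b x y = 1) ∧
    (∃ p ∈ NSbar, ∀ q ∈ NSbar, distSq fEx p ≤ distSq fEx q) ∧
    (∀ p ∈ NSbar, (∀ q ∈ NSbar, distSq fEx p ≤ distSq fEx q) →
      p 1 1 1 1 = -3/40 ∧ p 1 1 1 1 < 0) := by
  have hself : distSq fEx pEx = distSq fEx pEx + distSq pEx pEx := key pEx pEx_mem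
  have hpp : distSq pEx pEx = 0 := by linarith
  refine ⟨?_, ?_, ?_, ?_⟩
  · intro a b x y; fin_cases a <;> fin_cases b <;> fin_cases x <;> fin_cases y <;>
      norm_num [fEx]
  · intro x y; fin_cases x <;> fin_cases y <;>
      simp [fEx, Fin.sum_univ_two] <;> norm_num
  · exact ⟨pEx, pEx_mem, fun q hq => by
      have := key q hq
      have := distSq_nonneg pEx q
      linarith⟩
  · intro p hp hmin
    have h1 : distSq fEx p ≤ distSq fEx pEx := hmin pEx pEx_mem
    have h2 : distSq fEx p = distSq fEx pEx + distSq pEx p := key p hp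
    have h3 : distSq pEx p ≤ 0 := by linarith
    have h4 : distSq pEx p = 0 := le_antisymm h3 (distSq_nonneg pEx p)
    have hterm : (pEx 1 1 1 1 - p 1 1 1 1) ^ 2 = 0 := by
      simp only [distSq, Fin.sum_univ_two] at h4
      linarith [sq_nonneg (pEx 0 0 0 0 - p 0 0 0 0), sq_nonneg (pEx 0 0 0 1 - p 0 0 0 1),
        sq_nonneg (pEx 0 0 1 0 - p 0 0 1 0), sq_nonneg (pEx 0 0 1 1 - p 0 0 1 1),
        sq_nonneg (pEx 0 1 0 0 - p 0 1 0 0), sq_nonneg (pEx 0 1 0 1 - p 0 1 0 1),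
        sq_nonneg (pEx 0 1 1 0 - p 0 1 1 0), sq_nonneg (pEx 0 1 1 1 - p 0 1 1 1),
        sq_nonneg (pEx 1 0 0 0 - p 1 0 0 0), sq_nonneg (pEx 1 0 0 1 - p 1 0 0 1),
        sq_nonneg (pEx 1 0 1 0 - p 1 0 1 0), sq_nonneg (pEx 1 0 1 1 - p 1 0 1 1),
        sq_nonneg (pEx 1 1 0 0 - p 1 1 0 0), sq_nonneg (pEx 1 1 0 1 - p 1 1 0 1),
        sq_nonneg (pEx 1 1 1 0 - p 1 1 1 0), sq_nonneg (pEx 1 1 1 1 - p 1 1 1 1)]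
    have heq : p 1 1 1 1 = pEx 1 1 1 1 := by
      have := pow_eq_zero_iff (n := 2) (by norm_num) |>.mp hterm
      linarith [sub_eq_zero.mp this]
    have hval : pEx 1 1 1 1 = -3/40 := by norm_num [pEx]
    rw [heq, hval]
    norm_num
end

section
/- Define the 16×16 real matrix Π with rows and columns indexed by quadruples (a,b,x,y), (a',b',x',y') ∈ {0,1}⁴ by Π_{(a,b,x,y),(a',b',x',y')} = δ_{(a,b,x,y),(a',b',x',y')} − (1/16) ∑_{(i,j,k,l)∈ℐ} i^{a+a'} j^{b+b'} k^{x+x'} l^{y+y'}, where ℐ = {(+1,−1,−1,+1), (+1,−1,−1,−1), (−1,+1,+1,−1), (−1,+1,−1,−1)}. Then: (i) Π is symmetric; (ii) Π is idempotent (Π² = Π); (iii) Π P = P for every P in the nonsignaling affine subspace 𝒩̄; and (iv) Π f ∈ 𝒩̄ for every normalized f ∈ ℝ^16. Consequently, for every normalized f, Π f is the unique nearest point of 𝒩̄ to f in Euclidean norm. -/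
open scoped BigOperators

/-- Index type for correlation vectors in the simplest Bell scenario: quadruples
`(a, b, x, y)` with `a, b, x, y ∈ {0,1}`. -/
abbrev BellIdx : Type := Fin 2 × Fin 2 × Fin 2 × Fin 2

/-- The term `i^{a+a'} j^{b+b'} k^{x+x'} l^{y+y'}` for a quadruplet `(i,j,k,l)` of signs. -/
def quadTerm (ijkl : ℝ × ℝ × ℝ × ℝ) (p q : BellIdx) : ℝ :=
  ijkl.1 ^ (p.1.1 + q.1.1) * ijkl.2.1 ^ (p.2.1.1 + q.2.1.1) *
    ijkl.2.2.1 ^ (p.2.2.1.1 + q.2.2.1.1) * ijkl.2.2.2 ^ (p.2.2.2.1 + q.2.2.2.1)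

/-- The explicit 16×16 projection matrix `Π` of Eq. (B4) of the paper, with
`ℐ = {(+1,−1,−1,+1), (+1,−1,−1,−1), (−1,+1,+1,−1), (−1,+1,−1,−1)}`. -/
noncomputable def PiMat : Matrix BellIdx BellIdx ℝ := fun p q =>
  (if p = q then 1 else 0) -
    (1 / 16) * (quadTerm (1, -1, -1, 1) p q + quadTerm (1, -1, -1, -1) p q +
      quadTerm (-1, 1, 1, -1) p q + quadTerm (-1, 1, -1, -1) p q)

/-- The nonsignaling affine subspace `𝒩̄ ⊆ ℝ^16`: normalized vectors satisfying the
nonsignaling equalities. -/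
def NSbar16 : Set (BellIdx → ℝ) :=
  {v | (∀ x y, ∑ a, ∑ b, v (a, b, x, y) = 1) ∧
       (∀ a x y y', ∑ b, v (a, b, x, y) = ∑ b, v (a, b, x, y')) ∧
       (∀ b x x' y, ∑ a, v (a, b, x, y) = ∑ a, v (a, b, x', y))}

/-- Squared Euclidean distance on `ℝ^16`. -/
def distSq16 (f g : BellIdx → ℝ) : ℝ := ∑ i, (f i - g i) ^ 2

def chi (s : ℝ × ℝ × ℝ × ℝ) (p : BellIdx) : ℝ :=
  s.1 ^ p.1.1 * s.2.1 ^ p.2.1.1 * s.2.2.1 ^ p.2.2.1.1 * s.2.2.2 ^ p.2.2.2.1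

lemma quadTerm_eq (s : ℝ × ℝ × ℝ × ℝ) (p q : BellIdx) :
    quadTerm s p q = chi s p * chi s q := by
  simp only [quadTerm, chi, pow_add]; ring

noncomputable def c1 : BellIdx → ℝ := chi (1,-1,-1,1)
noncomputable def c2 : BellIdx → ℝ := chi (1,-1,-1,-1)
noncomputable def c3 : BellIdx → ℝ := chi (-1,1,1,-1)
noncomputable def c4 : BellIdx → ℝ := chi (-1,1,-1,-1)

lemma piMat_eq (p q : BellIdx) :
    PiMat p q = (if p = q then 1 else 0) -
      (1/16) * (c1 p * c1 q + c2 p * c2 q + c3 p * c3 q + c4 p * c4 q) := by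
  simp only [PiMat, quadTerm_eq, c1, c2, c3, c4]

lemma mulVec_apply (v : BellIdx → ℝ) (p : BellIdx) :
    PiMat.mulVec v p = v p - (1/16) * (c1 p * (∑ q, c1 q * v q) + c2 p * (∑ q, c2 q * v q)
      + c3 p * (∑ q, c3 q * v q) + c4 p * (∑ q, c4 q * v q)) := by
  simp only [Matrix.mulVec, dotProduct, piMat_eq, sub_mul, ite_mul, one_mul, zero_mul,
    Finset.sum_sub_distrib, Finset.sum_ite_eq, Finset.mem_univ, if_true]
  congr 1
  have h : ∀ q : BellIdx, (1/16:ℝ) * (c1 p * c1 q + c2 p * c2 q + c3 p * c3 q + c4 p * c4 q) * v q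
      = (1/16 * c1 p) * (c1 q * v q) + (1/16 * c2 p) * (c2 q * v q)
        + (1/16 * c3 p) * (c3 q * v q) + (1/16 * c4 p) * (c4 q * v q) := fun q => by ring
  rw [Finset.sum_congr rfl fun q _ => h q, Finset.sum_add_distrib, Finset.sum_add_distrib,
    Finset.sum_add_distrib, ← Finset.mul_sum, ← Finset.mul_sum, ← Finset.mul_sum,
    ← Finset.mul_sum]
  ring


lemma dot11 : ∑ q, c1 q * c1 q = 16 := by simp [Fintype.sum_prod_type, Fin.sum_univ_two, c1, chi]; norm_num
lemma dot22 : ∑ q, c2 q * c2 q = 16 := by simp [Fintype.sum_prod_type, Fin.sum_univ_two, c2, chi]; norm_num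
lemma dot33 : ∑ q, c3 q * c3 q = 16 := by simp [Fintype.sum_prod_type, Fin.sum_univ_two, c3, chi]; norm_num
lemma dot44 : ∑ q, c4 q * c4 q = 16 := by simp [Fintype.sum_prod_type, Fin.sum_univ_two, c4, chi]; norm_num
lemma dot12 : ∑ q, c1 q * c2 q = 0 := by norm_num [Fintype.sum_prod_type, Fin.sum_univ_two, c1, c2, chi]
lemma dot13 : ∑ q, c1 q * c3 q = 0 := by norm_num [Fintype.sum_prod_type, Fin.sum_univ_two, c1, c3, chi]
lemma dot14 : ∑ q, c1 q * c4 q = 0 := by norm_num [Fintype.sum_prod_type, Fin.sum_univ_two, c1, c4, chi]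
lemma dot21 : ∑ q, c2 q * c1 q = 0 := by norm_num [Fintype.sum_prod_type, Fin.sum_univ_two, c1, c2, chi]
lemma dot23 : ∑ q, c2 q * c3 q = 0 := by norm_num [Fintype.sum_prod_type, Fin.sum_univ_two, c2, c3, chi]
lemma dot24 : ∑ q, c2 q * c4 q = 0 := by norm_num [Fintype.sum_prod_type, Fin.sum_univ_two, c2, c4, chi]
lemma dot31 : ∑ q, c3 q * c1 q = 0 := by norm_num [Fintype.sum_prod_type, Fin.sum_univ_two, c1, c3, chi]
lemma dot32 : ∑ q, c3 q * c2 q = 0 := by norm_num [Fintype.sum_prod_type, Fin.sum_univ_two, c2, c3, chi]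
lemma dot34 : ∑ q, c3 q * c4 q = 0 := by norm_num [Fintype.sum_prod_type, Fin.sum_univ_two, c3, c4, chi]
lemma dot41 : ∑ q, c4 q * c1 q = 0 := by norm_num [Fintype.sum_prod_type, Fin.sum_univ_two, c1, c4, chi]
lemma dot42 : ∑ q, c4 q * c2 q = 0 := by norm_num [Fintype.sum_prod_type, Fin.sum_univ_two, c2, c4, chi]
lemma dot43 : ∑ q, c4 q * c3 q = 0 := by norm_num [Fintype.sum_prod_type, Fin.sum_univ_two, c3, c4, chi]

lemma mulVec_c1 : PiMat.mulVec c1 = 0 := by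
  funext p; simp only [mulVec_apply, dot11, dot21, dot31, dot41, Pi.zero_apply]; ring
lemma mulVec_c2 : PiMat.mulVec c2 = 0 := by
  funext p; simp only [mulVec_apply, dot12, dot22, dot32, dot42, Pi.zero_apply]; ring
lemma mulVec_c3 : PiMat.mulVec c3 = 0 := by
  funext p; simp only [mulVec_apply, dot13, dot23, dot33, dot43, Pi.zero_apply]; ring
lemma mulVec_c4 : PiMat.mulVec c4 = 0 := by
  funext p; simp only [mulVec_apply, dot14, dot24, dot34, dot44, Pi.zero_apply]; ring

lemma piMat_symm (p q : BellIdx) : PiMat p q = PiMat q p := by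
  rcases eq_or_ne p q with h | h
  · rw [h]
  · simp only [piMat_eq, if_neg h, if_neg (Ne.symm h)]; ring

lemma piMat_col_dot (i : BellIdx → ℝ) (hi : PiMat.mulVec i = 0) (q : BellIdx) :
    ∑ r, i r * PiMat r q = 0 := by
  have := congrFun hi q
  simp only [Matrix.mulVec, dotProduct, Pi.zero_apply] at this
  calc ∑ r, i r * PiMat r q = ∑ r, PiMat q r * i r := by
        refine Finset.sum_congr rfl fun r _ => ?_; rw [piMat_symm r q]; ring
    _ = 0 := this

lemma piMat_idem : PiMat * PiMat = PiMat := by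
  ext p q
  have : (PiMat * PiMat) p q = PiMat.mulVec (fun r => PiMat r q) p := rfl
  rw [this, mulVec_apply, piMat_col_dot c1 mulVec_c1, piMat_col_dot c2 mulVec_c2,
    piMat_col_dot c3 mulVec_c3, piMat_col_dot c4 mulVec_c4]
  ring

lemma dotP_c1 (P : BellIdx → ℝ)
    (h3 : ∀ b x x' y, ∑ a, P (a,b,x,y) = ∑ a, P (a,b,x',y)) : ∑ q, c1 q * P q = 0 := by
  have e1 := h3 0 0 1 0
  have e2 := h3 0 0 1 1
  have e3 := h3 1 0 1 0
  have e4 := h3 1 0 1 1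
  norm_num [Fin.sum_univ_two] at e1 e2 e3 e4
  norm_num [Fintype.sum_prod_type, Fin.sum_univ_two, c1, chi]
  linarith [e1, e2, e3, e4]

lemma dotP_c2 (P : BellIdx → ℝ)
    (h3 : ∀ b x x' y, ∑ a, P (a,b,x,y) = ∑ a, P (a,b,x',y)) : ∑ q, c2 q * P q = 0 := by
  have e1 := h3 0 0 1 0
  have e2 := h3 0 0 1 1
  have e3 := h3 1 0 1 0
  have e4 := h3 1 0 1 1
  norm_num [Fin.sum_univ_two] at e1 e2 e3 e4
  norm_num [Fintype.sum_prod_type, Fin.sum_univ_two, c2, chi]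
  linarith [e1, e2, e3, e4]

lemma dotP_c3 (P : BellIdx → ℝ)
    (h2 : ∀ a x y y', ∑ b, P (a,b,x,y) = ∑ b, P (a,b,x,y')) : ∑ q, c3 q * P q = 0 := by
  have e1 := h2 0 0 0 1
  have e2 := h2 0 1 0 1
  have e3 := h2 1 0 0 1
  have e4 := h2 1 1 0 1
  norm_num [Fin.sum_univ_two] at e1 e2 e3 e4
  norm_num [Fintype.sum_prod_type, Fin.sum_univ_two, c3, chi]
  linarith [e1, e2, e3, e4]

lemma dotP_c4 (P : BellIdx → ℝ)
    (h2 : ∀ a x y y', ∑ b, P (a,b,x,y) = ∑ b, P (a,b,x,y')) : ∑ q, c4 q * P q = 0 := by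
  have e1 := h2 0 0 0 1
  have e2 := h2 0 1 0 1
  have e3 := h2 1 0 0 1
  have e4 := h2 1 1 0 1
  norm_num [Fin.sum_univ_two] at e1 e2 e3 e4
  norm_num [Fintype.sum_prod_type, Fin.sum_univ_two, c4, chi]
  linarith [e1, e2, e3, e4]

lemma piMat_fix (P : BellIdx → ℝ) (hP : P ∈ NSbar16) : PiMat.mulVec P = P := by
  obtain ⟨h1, h2, h3⟩ := hP
  funext p
  rw [mulVec_apply, dotP_c1 P h3, dotP_c2 P h3, dotP_c3 P h2, dotP_c4 P h2]
  ring


lemma dotf_c1 (f : BellIdx → ℝ) : ∑ q, c1 q * f q = f (0,0,0,0) + f (0,0,0,1) - f (0,0,1,0) - f (0,0,1,1) - f (0,1,0,0) - f (0,1,0,1) + f (0,1,1,0) + f (0,1,1,1) + f (1,0,0,0) + f (1,0,0,1) - f (1,0,1,0) - f (1,0,1,1) - f (1,1,0,0) - f (1,1,0,1) + f (1,1,1,0) + f (1,1,1,1) := by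
  norm_num [Fintype.sum_prod_type, Fin.sum_univ_two, c1, chi]
  ring

lemma dotf_c2 (f : BellIdx → ℝ) : ∑ q, c2 q * f q = f (0,0,0,0) - f (0,0,0,1) - f (0,0,1,0) + f (0,0,1,1) - f (0,1,0,0) + f (0,1,0,1) + f (0,1,1,0) - f (0,1,1,1) + f (1,0,0,0) - f (1,0,0,1) - f (1,0,1,0) + f (1,0,1,1) - f (1,1,0,0) + f (1,1,0,1) + f (1,1,1,0) - f (1,1,1,1) := by
  norm_num [Fintype.sum_prod_type, Fin.sum_univ_two, c2, chi]
  ring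

lemma dotf_c3 (f : BellIdx → ℝ) : ∑ q, c3 q * f q = f (0,0,0,0) - f (0,0,0,1) + f (0,0,1,0) - f (0,0,1,1) + f (0,1,0,0) - f (0,1,0,1) + f (0,1,1,0) - f (0,1,1,1) - f (1,0,0,0) + f (1,0,0,1) - f (1,0,1,0) + f (1,0,1,1) - f (1,1,0,0) + f (1,1,0,1) - f (1,1,1,0) + f (1,1,1,1) := by
  norm_num [Fintype.sum_prod_type, Fin.sum_univ_two, c3, chi]
  ring

lemma dotf_c4 (f : BellIdx → ℝ) : ∑ q, c4 q * f q = f (0,0,0,0) - f (0,0,0,1) - f (0,0,1,0) + f (0,0,1,1) + f (0,1,0,0) - f (0,1,0,1) - f (0,1,1,0) + f (0,1,1,1) - f (1,0,0,0) + f (1,0,0,1) + f (1,0,1,0) - f (1,0,1,1) - f (1,1,0,0) + f (1,1,0,1) + f (1,1,1,0) - f (1,1,1,1) := by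
  norm_num [Fintype.sum_prod_type, Fin.sum_univ_two, c4, chi]
  ring

lemma fin2_pair {y y' : Fin 2} (h : y ≠ y') : (y = 0 ∧ y' = 1) ∨ (y = 1 ∧ y' = 0) := by
  omega

set_option maxHeartbeats 2000000 in
lemma piMat_maps (f : BellIdx → ℝ) (hf : ∀ x y, ∑ a, ∑ b, f (a, b, x, y) = 1) :
    PiMat.mulVec f ∈ NSbar16 := by
  have n1 := hf 0 0; have n2 := hf 0 1; have n3 := hf 1 0; have n4 := hf 1 1
  norm_num [Fin.sum_univ_two] at n1 n2 n3 n4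
  refine ⟨?_, ?_, ?_⟩
  · simp only [Fin.forall_fin_two]
    refine ⟨⟨?_, ?_⟩, ?_, ?_⟩ <;>
    · simp only [mulVec_apply, Fin.sum_univ_two, dotf_c1, dotf_c2, dotf_c3, dotf_c4]
      norm_num [c1, c2, c3, c4, chi]
      linarith [n1, n2, n3, n4]
  · intro a x y y'
    rcases eq_or_ne y y' with rfl | h
    · rfl
    have key : ∀ a x : Fin 2, ∑ b, PiMat.mulVec f (a, b, x, 0) = ∑ b, PiMat.mulVec f (a, b, x, 1) := by
      simp only [Fin.forall_fin_two]
      refine ⟨⟨?_, ?_⟩, ?_, ?_⟩ <;>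
      · simp only [mulVec_apply, Fin.sum_univ_two, dotf_c1, dotf_c2, dotf_c3, dotf_c4]
        norm_num [c1, c2, c3, c4, chi]
        linarith [n1, n2, n3, n4]
    rcases fin2_pair h with ⟨rfl, rfl⟩ | ⟨rfl, rfl⟩
    · exact key a x
    · exact (key a x).symm
  · intro b x x' y
    rcases eq_or_ne x x' with rfl | h
    · rfl
    have key : ∀ b y : Fin 2, ∑ a, PiMat.mulVec f (a, b, 0, y) = ∑ a, PiMat.mulVec f (a, b, 1, y) := by
      simp only [Fin.forall_fin_two]
      refine ⟨⟨?_, ?_⟩, ?_, ?_⟩ <;>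
      · simp only [mulVec_apply, Fin.sum_univ_two, dotf_c1, dotf_c2, dotf_c3, dotf_c4]
        norm_num [c1, c2, c3, c4, chi]
        linarith [n1, n2, n3, n4]
    rcases fin2_pair h with ⟨rfl, rfl⟩ | ⟨rfl, rfl⟩
    · exact key b y
    · exact (key b y).symm

open Matrix in
lemma cross_zero (f : BellIdx → ℝ) (hf : ∀ x y, ∑ a, ∑ b, f (a, b, x, y) = 1)
    (q : BellIdx → ℝ) (hq : q ∈ NSbar16) :
    ∑ i, (f i - PiMat.mulVec f i) * (PiMat.mulVec f i - q i) = 0 := by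
  have hgfix : PiMat.mulVec (PiMat.mulVec f) = PiMat.mulVec f :=
    piMat_fix _ (piMat_maps f hf)
  have hqfix : PiMat.mulVec q = q := piMat_fix q hq
  have hw : PiMat.mulVec (PiMat.mulVec f - q) = PiMat.mulVec f - q := by
    rw [Matrix.mulVec_sub, hgfix, hqfix]
  have hsymm : PiMatᵀ = PiMat := by
    ext p r; exact piMat_symm r p
  have hker : PiMat.mulVec (f - PiMat.mulVec f) = 0 := by
    rw [Matrix.mulVec_sub, hgfix, sub_self]
  calc ∑ i, (f i - PiMat.mulVec f i) * (PiMat.mulVec f i - q i)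
      = (f - PiMat.mulVec f) ⬝ᵥ (PiMat.mulVec f - q) := by
        simp [dotProduct, Pi.sub_apply]
    _ = (f - PiMat.mulVec f) ⬝ᵥ PiMat.mulVec (PiMat.mulVec f - q) := by rw [hw]
    _ = ((f - PiMat.mulVec f) ᵥ* PiMat) ⬝ᵥ (PiMat.mulVec f - q) :=
        Matrix.dotProduct_mulVec _ _ _
    _ = (PiMat.mulVec (f - PiMat.mulVec f)) ⬝ᵥ (PiMat.mulVec f - q) := by
        rw [← Matrix.mulVec_transpose, hsymm]
    _ = 0 := by rw [hker, zero_dotProduct]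

lemma pyth (f : BellIdx → ℝ) (hf : ∀ x y, ∑ a, ∑ b, f (a, b, x, y) = 1)
    (q : BellIdx → ℝ) (hq : q ∈ NSbar16) :
    distSq16 f q = distSq16 f (PiMat.mulVec f) + distSq16 (PiMat.mulVec f) q := by
  have hc := cross_zero f hf q hq
  simp only [distSq16]
  have key : ∀ i : BellIdx, (f i - q i) ^ 2 = (f i - PiMat.mulVec f i) ^ 2
      + (PiMat.mulVec f i - q i) ^ 2
      + 2 * ((f i - PiMat.mulVec f i) * (PiMat.mulVec f i - q i)) := fun i => by ring
  rw [Finset.sum_congr rfl fun i _ => key i, Finset.sum_add_distrib, Finset.sum_add_distrib,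
    ← Finset.mul_sum, hc]
  ring

/-- **The explicit projection matrix `Π` realizes the orthogonal projection onto the
nonsignaling affine subspace.** `Π` is symmetric and idempotent, fixes `𝒩̄` pointwise, maps
every normalized vector into `𝒩̄`, and consequently sends every normalized `f` to the unique
nearest point of `𝒩̄` in Euclidean norm. -/
theorem stmt_16 :
    (∀ p q, PiMat p q = PiMat q p) ∧
    (PiMat * PiMat = PiMat) ∧
    (∀ P ∈ NSbar16, PiMat.mulVec P = P) ∧
    (∀ f : BellIdx → ℝ, (∀ x y, ∑ a, ∑ b, f (a, b, x, y) = 1) → PiMat.mulVec f ∈ NSbar16) ∧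
    (∀ f : BellIdx → ℝ, (∀ x y, ∑ a, ∑ b, f (a, b, x, y) = 1) →
      (∀ q ∈ NSbar16, distSq16 f (PiMat.mulVec f) ≤ distSq16 f q) ∧
      (∀ p ∈ NSbar16, (∀ q ∈ NSbar16, distSq16 f p ≤ distSq16 f q) → p = PiMat.mulVec f)) := by
  refine ⟨piMat_symm, piMat_idem, fun P hP => piMat_fix P hP, fun f hf => piMat_maps f hf, ?_⟩
  intro f hf
  have hg : PiMat.mulVec f ∈ NSbar16 := piMat_maps f hf
  refine ⟨fun q hq => ?_, fun p hp hmin => ?_⟩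
  · rw [pyth f hf q hq]
    have h0 : 0 ≤ distSq16 (PiMat.mulVec f) q := Finset.sum_nonneg fun i _ => sq_nonneg _
    linarith
  · have h1 := hmin (PiMat.mulVec f) hg
    have h2 := pyth f hf p hp
    have h0 : 0 ≤ distSq16 (PiMat.mulVec f) p := Finset.sum_nonneg fun i _ => sq_nonneg _
    have h3 : distSq16 (PiMat.mulVec f) p = 0 := by linarith
    have h4 := (Finset.sum_eq_zero_iff_of_nonneg
      (fun i (_ : i ∈ Finset.univ) => sq_nonneg (PiMat.mulVec f i - p i))).mp h3
    funext i
    have h5 : (PiMat.mulVec f i - p i) ^ 2 = 0 := h4 i (Finset.mem_univ i)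
    have h6 : PiMat.mulVec f i - p i = 0 := by
      exact pow_eq_zero_iff (by norm_num) |>.mp h5
    linarith
end
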